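/- arXiv:1211.0635 — 2 statements merged into one kernel-verified Lean document; each statement's English description precedes it below -/
import Mathlib

section
/- Fix λ ∈ Λ and let M_λ = (ℝⁿ ∖ {0}) / ⟨φ_λ⟩ be the orbit space of the ℤ-action k • x = φ_λ^k x, with the quotient topology and its Borel σ-algebra. Since φ^t commutes with φ_λ, each φ^t descends to a homeomorphism φ̄^t : M_λ → M_λ. Then there is no finite Borel measure μ on M_λ such that μ(V) > 0 for every nonempty open set V ⊆ M_λ and μ((φ̄^t)^{−1}(A)) = μ(A) for every Borel set A and every t ∈ ℝ. -/
/-- The diagonal entries of the linear map `φ_λ`, `λ = (α,β)`: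
`(e^{-α+2β}, e^{3α}, e^{2α-β}, e^{3β}, e^{α+β}, …, e^{α+β})` (0-based position `j`). -/
noncomputable def phiDiag (α β : ℝ) (j : ℕ) : ℝ :=
  if j = 0 then Real.exp (-α + 2 * β)
  else if j = 1 then Real.exp (3 * α)
  else if j = 2 then Real.exp (2 * α - β)
  else if j = 3 then Real.exp (3 * β)
  else Real.exp (α + β)

/-- The diagonal entries of the flow `φ^t`:
`(e^{-3t/2}, e^{-3t/2}, 1, e^{-3t}, e^{-3t/2}, …, e^{-3t/2})` (0-based position `j`). -/
noncomputable def flowDiag (t : ℝ) (j : ℕ) : ℝ :=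
  if j = 2 then 1
  else if j = 3 then Real.exp (-(3 * t))
  else Real.exp (-(3 * t) / 2)

/-- The orbit equivalence relation of the `ℤ`-action `k • x = φ_λ^k x` on `ℝⁿ ∖ {0}`:
`x ∼ y` iff `y = φ_λ^k x` for some `k ∈ ℤ`. The orbit space `M_λ` is `Quot` of
this relation, with the quotient topology. -/
noncomputable def phiOrbitRel (n : ℕ) (α β : ℝ) :
    {x : Fin n → ℝ // x ≠ 0} → {x : Fin n → ℝ // x ≠ 0} → Prop :=
  fun x y => ∃ k : ℤ, (fun j : Fin n => phiDiag α β (j : ℕ) ^ k * x.1 j) = y.1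

/-!
Write `ℓ(x) = β log|x₂| - α log|x₄|` on the open cone where `x₂ x₄ ≠ 0`. Since `φ_λ` scales
`x₂, x₄` by `e^{3α}, e^{3β}`, `ℓ` is `φ_λ`-invariant, so the sets `{ℓ ∈ O}`, `O ⊆ ℝ` open,
descend to open subsets of `M_λ`. The flow shifts `ℓ` by `3t(α - β/2)`; at `t = -1` this is a shift by
`c = 3(β/2 - α) > 0`, so `φ̄^{-1}` pulls `{ℓ < 0}` back to `{ℓ < -c}`. An invariant finite
measure gives these two nested open sets the same measure, so the nonempty open set
`{-c < ℓ < 0}` between them is null.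
-/

open MeasureTheory Set

lemma MeasureTheory.measure_eq_zero_of_subset_sdiff {X : Type*} [MeasurableSpace X]
    {μ : Measure X} {s u w : Set X} (hsu : s ⊆ u) (hs : NullMeasurableSet s μ)
    (hu : μ u ≠ ⊤) (hμ : μ u ≤ μ s) (hw : w ⊆ u \ s) : μ w = 0 :=
  measure_mono_null hw (ae_eq_set.1 (ae_eq_of_subset_of_measure_ge hsu hμ hs hu)).2

section LogRatio

variable {m : ℕ} (α β : ℝ)

-- `x 1` and `x 3` are the coordinates `x₂` and `x₄` of the paper (indices are 0-based).
noncomputable def logRatio (x : Fin (m + 4) → ℝ) : ℝ :=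
  β * Real.log |x 1| - α * Real.log |x 3|

def logRatioSet (O : Set ℝ) : Set (Fin (m + 4) → ℝ) :=
  {x | x 1 ≠ 0 ∧ x 3 ≠ 0} ∩ logRatio α β ⁻¹' O

variable {α β}

lemma logRatio_mul {d x : Fin (m + 4) → ℝ} (hd1 : 0 < d 1) (hd3 : 0 < d 3)
    (hx1 : x 1 ≠ 0) (hx3 : x 3 ≠ 0) :
    logRatio α β (d * x) =
      logRatio α β x + (β * Real.log (d 1) - α * Real.log (d 3)) := by
  simp only [logRatio, Pi.mul_apply, abs_mul, abs_of_pos hd1, abs_of_pos hd3,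
    Real.log_mul hd1.ne' (abs_ne_zero.2 hx1), Real.log_mul hd3.ne' (abs_ne_zero.2 hx3)]
  ring

lemma mul_mem_logRatioSet_iff {d x : Fin (m + 4) → ℝ} (hd1 : 0 < d 1) (hd3 : 0 < d 3)
    {O : Set ℝ} :
    d * x ∈ logRatioSet α β O ↔
      x ∈ logRatioSet α β ((· + (β * Real.log (d 1) - α * Real.log (d 3))) ⁻¹' O) := by
  simp only [logRatioSet, mem_inter_iff, mem_ofPred, mem_preimage, Pi.mul_apply,
    mul_ne_zero_iff, hd1.ne', hd3.ne', ne_eq, not_false_eq_true, true_and]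
  exact and_congr_right fun ⟨hx1, hx3⟩ => by rw [logRatio_mul hd1 hd3 hx1 hx3]

lemma isOpen_logRatioSet {O : Set ℝ} (hO : IsOpen O) :
    IsOpen (logRatioSet (m := m) α β O) := by
  have hne : IsOpen {x : Fin (m + 4) → ℝ | x 1 ≠ 0 ∧ x 3 ≠ 0} :=
    (isOpen_ne_fun (continuous_apply 1) continuous_const).inter
      (isOpen_ne_fun (continuous_apply 3) continuous_const)
  have hcont : ContinuousOn (logRatio (m := m) α β) {x | x 1 ≠ 0 ∧ x 3 ≠ 0} := by
    unfold logRatio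
    fun_prop (disch := simp_all)
  exact hcont.isOpen_inter_preimage hne hO

lemma exists_logRatio_eq (hα : α ≠ 0) (s : ℝ) :
    ∃ x : Fin (m + 4) → ℝ, x ≠ 0 ∧ x ∈ logRatioSet α β {s} := by
  have h13 : (1 : Fin (m + 4)) ≠ 3 :=
    Fin.ne_of_val_ne (by simp [Nat.mod_eq_of_lt (show 3 < m + 4 by omega)])
  refine ⟨Function.update 1 3 (Real.exp (-s / α)),
    fun h => by simpa [h13] using congrFun h 1, ?_⟩
  simp [logRatioSet, logRatio, h13, Real.exp_ne_zero]
  field_simp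

end LogRatio

lemma phiDiag_pos (α β : ℝ) (j : ℕ) : 0 < phiDiag α β j := by
  unfold phiDiag; split_ifs <;> exact Real.exp_pos _

lemma flowDiag_pos (t : ℝ) (j : ℕ) : 0 < flowDiag t j := by
  unfold flowDiag; split_ifs <;> positivity

section Quotient

variable {m : ℕ} {α β : ℝ}

lemma phiOrbitRel.mem_logRatioSet_iff {x y : {x : Fin (m + 4) → ℝ // x ≠ 0}}
    (h : phiOrbitRel (m + 4) α β x y) (O : Set ℝ) :
    x.1 ∈ logRatioSet α β O ↔ y.1 ∈ logRatioSet α β O := by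
  obtain ⟨k, hk⟩ := h
  have hshift : β * Real.log (phiDiag α β (1 : Fin (m + 4)) ^ k) -
      α * Real.log (phiDiag α β (3 : Fin (m + 4)) ^ k) = 0 := by
    simp [phiDiag, Real.log_zpow, Nat.mod_eq_of_lt (show 3 < m + 4 by omega)]
    ring
  rw [← hk]
  change _ ↔ (fun j : Fin (m + 4) => phiDiag α β j ^ k) * x.1 ∈ _
  rw [mul_mem_logRatioSet_iff (zpow_pos (phiDiag_pos α β _) k) (zpow_pos (phiDiag_pos α β _) k)]
  simp only [hshift, add_zero, preimage_id']

variable (α β) in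
def orbitLogRatioSet (O : Set ℝ) : Set (Quot (phiOrbitRel (m + 4) α β)) :=
  {q | Quot.lift (fun x => x.1 ∈ logRatioSet α β O)
    (fun _ _ h => propext (h.mem_logRatioSet_iff O)) q}

lemma mk_mem_orbitLogRatioSet {O : Set ℝ} {x : {x : Fin (m + 4) → ℝ // x ≠ 0}} :
    Quot.mk _ x ∈ orbitLogRatioSet α β O ↔ x.1 ∈ logRatioSet α β O := Iff.rfl

lemma orbitLogRatioSet_mono {O O' : Set ℝ} (h : O ⊆ O') :
    orbitLogRatioSet (m := m) α β O ⊆ orbitLogRatioSet α β O' := by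
  rintro ⟨x⟩ ⟨hx, hO⟩
  exact ⟨hx, h hO⟩

lemma orbitLogRatioSet_diff (O O' : Set ℝ) :
    orbitLogRatioSet (m := m) α β (O \ O') =
      orbitLogRatioSet α β O \ orbitLogRatioSet α β O' := by
  ext ⟨x⟩
  simp only [mem_sdiff, mk_mem_orbitLogRatioSet, logRatioSet, mem_inter_iff, mem_preimage]
  tauto

lemma isOpen_orbitLogRatioSet {O : Set ℝ} (hO : IsOpen O) :
    IsOpen (orbitLogRatioSet (m := m) α β O) :=
  isOpen_coinduced.2 ((isOpen_logRatioSet hO).preimage continuous_subtype_val)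

lemma orbitLogRatioSet_nonempty (hα : α ≠ 0) {O : Set ℝ} (hO : O.Nonempty) :
    (orbitLogRatioSet (m := m) α β O).Nonempty := by
  obtain ⟨s, hs⟩ := hO
  obtain ⟨x, hx0, hx, rfl⟩ := exists_logRatio_eq (m := m) (β := β) hα s
  exact ⟨Quot.mk _ ⟨x, hx0⟩, hx, hs⟩

end Quotient

noncomputable def flowMap {n : ℕ} (t : ℝ) (x : {x : Fin n → ℝ // x ≠ 0}) :
    {x : Fin n → ℝ // x ≠ 0} :=
  ⟨fun j => flowDiag t j * x.1 j, fun h => x.2 <| funext fun j =>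
    (mul_eq_zero.1 (congrFun h j)).resolve_left (flowDiag_pos t j).ne'⟩

lemma phiOrbitRel.flowMap {n : ℕ} {α β : ℝ} (t : ℝ) {x y : {x : Fin n → ℝ // x ≠ 0}}
    (h : phiOrbitRel n α β x y) : phiOrbitRel n α β (flowMap t x) (flowMap t y) := by
  obtain ⟨k, hk⟩ := h
  refine ⟨k, funext fun j => ?_⟩
  change _ * (flowDiag t j * x.1 j) = flowDiag t j * y.1 j
  rw [← hk]
  exact mul_left_comm _ _ _

noncomputable def orbitFlow {n : ℕ} (α β t : ℝ) :
    Quot (phiOrbitRel n α β) → Quot (phiOrbitRel n α β) :=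
  Quot.map (flowMap t) fun _ _ => phiOrbitRel.flowMap t

lemma preimage_orbitFlow_orbitLogRatioSet {m : ℕ} {α β : ℝ} (t : ℝ) (O : Set ℝ) :
    orbitFlow (n := m + 4) α β t ⁻¹' orbitLogRatioSet α β O =
      orbitLogRatioSet α β ((· + 3 * t * (α - β / 2)) ⁻¹' O) := by
  have hshift : β * Real.log (flowDiag t (1 : Fin (m + 4))) -
      α * Real.log (flowDiag t (3 : Fin (m + 4))) = 3 * t * (α - β / 2) := by
    simp [flowDiag, Nat.mod_eq_of_lt (show 3 < m + 4 by omega)]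
    ring
  ext ⟨x⟩
  change (fun j : Fin (m + 4) => flowDiag t j) * x.1 ∈ logRatioSet α β O ↔ _
  rw [mul_mem_logRatioSet_iff (flowDiag_pos t _) (flowDiag_pos t _)]
  simp only [hshift]
  rfl

theorem no_invariant_finite_measure_general (n : ℕ) (hn : 4 ≤ n) (α β : ℝ)
    (h1 : α < β) (h3 : α / 2 < 0) :
    ¬ ∃ μ : @MeasureTheory.Measure (Quot (phiOrbitRel n α β))
        (borel (Quot (phiOrbitRel n α β))),
      μ Set.univ < ⊤ ∧
      (∀ V : Set (Quot (phiOrbitRel n α β)), IsOpen V → V.Nonempty → 0 < μ V) ∧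
      (∀ t : ℝ, ∀ F : Quot (phiOrbitRel n α β) → Quot (phiOrbitRel n α β),
        (∀ x y : {x : Fin n → ℝ // x ≠ 0},
          (y.1 = fun j : Fin n => flowDiag t (j : ℕ) * x.1 j) →
            F (Quot.mk _ x) = Quot.mk _ y) →
        ∀ A : Set (Quot (phiOrbitRel n α β)),
          @MeasurableSet _ (borel (Quot (phiOrbitRel n α β))) A →
            μ (F ⁻¹' A) = μ A) := by
  rintro ⟨μ, hfin, hpos, hinv⟩
  obtain ⟨m, rfl⟩ : ∃ m, n = m + 4 := ⟨n - 4, by omega⟩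
  borelize (Quot (phiOrbitRel (m + 4) α β))
  have hc : 0 < 3 * (-1) * (α - β / 2) := by linarith
  set c := 3 * (-1) * (α - β / 2)
  set U := orbitLogRatioSet (m := m) α β (Iio 0)
  set S := orbitLogRatioSet (m := m) α β ((· + c) ⁻¹' Iio 0)
  set W := orbitLogRatioSet (m := m) α β (Ioo (-c) 0)
  have hSU : S ⊆ U := orbitLogRatioSet_mono fun s (hs : s + c < 0) => show s < 0 by linarith
  have hWUS : W ⊆ U \ S := by
    rw [← orbitLogRatioSet_diff]
    exact orbitLogRatioSet_mono fun s ⟨hs, hs'⟩ => ⟨hs', show ¬s + c < 0 by linarith⟩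
  have hμ : μ S = μ U := by
    have := hinv (-1) (orbitFlow α β (-1)) (fun x y hy => congrArg _ (Subtype.ext hy.symm)) U
      (isOpen_orbitLogRatioSet isOpen_Iio).measurableSet
    rwa [preimage_orbitFlow_orbitLogRatioSet] at this
  have hW : μ W = 0 := measure_eq_zero_of_subset_sdiff hSU
    (isOpen_orbitLogRatioSet (isOpen_Iio.preimage (continuous_add_const c))).nullMeasurableSet
    (measure_ne_top_of_subset (subset_univ U) hfin.ne) hμ.ge hWUS
  exact (hpos W (isOpen_orbitLogRatioSet isOpen_Ioo)
    (orbitLogRatioSet_nonempty (by linarith) (nonempty_Ioo.2 (by linarith)))).ne' hW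

/-- Strong essentiality: there is no finite Borel measure on `M_λ = (ℝⁿ∖{0})/⟨φ_λ⟩`
which is positive on nonempty open sets and invariant under every induced
homeomorphism `φ̄^t` (the descent of the flow `φ^t` to the quotient). -/
theorem no_invariant_finite_measure (n : ℕ) (hn : 4 ≤ n) (α β : ℝ)
    (h1 : α < β) (h2 : β < α / 2) (h3 : α / 2 < 0) :
    ¬ ∃ μ : @MeasureTheory.Measure (Quot (phiOrbitRel n α β))
        (borel (Quot (phiOrbitRel n α β))),
      μ Set.univ < ⊤ ∧
      (∀ V : Set (Quot (phiOrbitRel n α β)), IsOpen V → V.Nonempty → 0 < μ V) ∧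
      (∀ t : ℝ, ∀ F : Quot (phiOrbitRel n α β) → Quot (phiOrbitRel n α β),
        (∀ x y : {x : Fin n → ℝ // x ≠ 0},
          (y.1 = fun j : Fin n => flowDiag t (j : ℕ) * x.1 j) →
            F (Quot.mk _ x) = Quot.mk _ y) →
        ∀ A : Set (Quot (phiOrbitRel n α β)),
          @MeasurableSet _ (borel (Quot (phiOrbitRel n α β))) A →
            μ (F ⁻¹' A) = μ A) :=
  no_invariant_finite_measure_general n hn α β h1 h3
end

section
/- For every x ∈ ℝⁿ, the linear span in ℝⁿ of the set of all curvature values {R₍ᵢ,ⱼ,ₖ₎(x) : 1 ≤ i,j,k ≤ n} is exactly the two-dimensional subspace spanned by e₂ and e₄. In particular this span is nonzero at every point. -/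
/-- The `i`-th standard basis vector `eᵢ` of `ℝⁿ` (0-based). -/
def stdBasis (n : ℕ) (i : Fin n) : Fin n → ℝ := fun k => if k = i then 1 else 0

/-- The Christoffel vectors of `g₀`: `Γ₁₁(x) = -x₃ e₄`, `Γ₁₃(x) = Γ₃₁(x) = x₃ e₂`,
and `Γᵢⱼ(x) = 0` otherwise (1-based indices; here `i j` are 0-based, so
`Γ₀₀(x) = -x₂e₃` and `Γ₀₂(x) = Γ₂₀(x) = x₂e₁`). -/
def Gamma (n : ℕ) (hn : 4 ≤ n) (i j : Fin n) (x : Fin n → ℝ) : Fin n → ℝ :=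
  fun k =>
    if (i : ℕ) = 0 ∧ (j : ℕ) = 0 ∧ (k : ℕ) = 3 then -x ⟨2, by omega⟩
    else if (((i : ℕ) = 0 ∧ (j : ℕ) = 2) ∨ ((i : ℕ) = 2 ∧ (j : ℕ) = 0)) ∧ (k : ℕ) = 1 then
      x ⟨2, by omega⟩
    else 0

/-- The curvature components
`R₍ᵢ,ⱼ,ₖ₎(x) = ∂ᵢΓⱼₖ(x) − ∂ⱼΓᵢₖ(x) + Σₘ (Γⱼₖ(x))ₘ Γᵢₘ(x) − Σₘ (Γᵢₖ(x))ₘ Γⱼₘ(x)`. -/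
noncomputable def Rcurv (n : ℕ) (hn : 4 ≤ n) (i j k : Fin n) (x : Fin n → ℝ) :
    Fin n → ℝ :=
  fun l =>
    fderiv ℝ (fun y => Gamma n hn j k y l) x (stdBasis n i)
    - fderiv ℝ (fun y => Gamma n hn i k y l) x (stdBasis n j)
    + ∑ m : Fin n, Gamma n hn j k x m * Gamma n hn i m x l
    - ∑ m : Fin n, Gamma n hn i k x m * Gamma n hn j m x l

/-!
The Christoffel vectors of `g₀` are linear in `x` (each is a constant multiple of `x₃`), so
`∂ᵢΓⱼₖ(x) = Γⱼₖ(eᵢ)`. They are supported on the indices `j ∈ {1, 3}` with values in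
`span {e₂, e₄}`, so every product `(Γⱼₖ)ₘ Γᵢₘ` vanishes and `R₍ᵢ,ⱼ,ₖ₎(x) = Γⱼₖ(eᵢ) − Γᵢₖ(eⱼ)`,
a constant vector in `span {e₂, e₄}`. Conversely `R₍₃,₁,₃₎ = e₂` and `R₍₃,₁,₁₎ = −e₄`.
-/

lemma Submodule.pi_mem_span_pair_single {ι R : Type*} [DecidableEq ι] [Semiring R] {a b : ι}
    (hab : a ≠ b) {v : ι → R} (hv : ∀ l, l ≠ a → l ≠ b → v l = 0) :
    v ∈ Submodule.span R {Pi.single a 1, Pi.single b 1} := by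
  refine Submodule.mem_span_pair.2 ⟨v a, v b, funext fun l => ?_⟩
  by_cases ha : l = a
  · subst ha; simp [hab]
  by_cases hb : l = b
  · subst hb; simp [ha]
  simp [ha, hb, hv l ha hb]

lemma stdBasis_eq_single (n : ℕ) (i : Fin n) : stdBasis n i = Pi.single i 1 := by
  funext k
  simp [stdBasis, Pi.single_apply]

section Christoffel

variable {n : ℕ} {hn : 4 ≤ n}

lemma Gamma_apply_eq_mul (i j k : Fin n) (x : Fin n → ℝ) :
    Gamma n hn i j x k = x ⟨2, by omega⟩ * Gamma n hn i j 1 k := by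
  unfold Gamma
  split_ifs <;> simp

lemma fderiv_Gamma_apply (i j k : Fin n) (x v : Fin n → ℝ) :
    fderiv ℝ (fun y => Gamma n hn i j y k) x v = Gamma n hn i j v k := by
  have hfun : (fun y => Gamma n hn i j y k) = fun y => y ⟨2, by omega⟩ * Gamma n hn i j 1 k :=
    funext fun y => Gamma_apply_eq_mul i j k y
  rw [hfun, ((hasFDerivAt_apply (𝕜 := ℝ) _ x).mul_const _).fderiv, Gamma_apply_eq_mul (x := v)]
  simp [mul_comm]

lemma Gamma_apply_eq_zero {k : Fin n} (h₁ : (k : ℕ) ≠ 1) (h₃ : (k : ℕ) ≠ 3) (i j : Fin n)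
    (x : Fin n → ℝ) : Gamma n hn i j x k = 0 := by
  unfold Gamma
  split_ifs <;> first | omega | rfl

lemma Gamma_eq_zero {j : Fin n} (h₀ : (j : ℕ) ≠ 0) (h₂ : (j : ℕ) ≠ 2) (i : Fin n)
    (x : Fin n → ℝ) : Gamma n hn i j x = 0 := by
  funext k
  unfold Gamma
  split_ifs <;> first | omega | rfl

lemma Gamma_apply_mul_Gamma_apply (i j k m l : Fin n) (x : Fin n → ℝ) :
    Gamma n hn j k x m * Gamma n hn i m x l = 0 := by
  by_cases hm : (m : ℕ) = 1 ∨ (m : ℕ) = 3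
  · rw [Gamma_eq_zero (j := m) (by omega) (by omega)]
    simp
  · rw [Gamma_apply_eq_zero (by omega) (by omega), zero_mul]

lemma Rcurv_eq_sub (i j k : Fin n) (x : Fin n → ℝ) :
    Rcurv n hn i j k x = Gamma n hn j k (stdBasis n i) - Gamma n hn i k (stdBasis n j) := by
  funext l
  simp [Rcurv, fderiv_Gamma_apply, Gamma_apply_mul_Gamma_apply]

lemma Rcurv_apply_eq_zero {l : Fin n} (h₁ : (l : ℕ) ≠ 1) (h₃ : (l : ℕ) ≠ 3) (i j k : Fin n)
    (x : Fin n → ℝ) : Rcurv n hn i j k x l = 0 := by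
  simp [Rcurv_eq_sub, Gamma_apply_eq_zero h₁ h₃]

lemma Rcurv_two_zero_two (x : Fin n → ℝ) :
    Rcurv n hn ⟨2, by omega⟩ ⟨0, by omega⟩ ⟨2, by omega⟩ x = stdBasis n ⟨1, by linarith⟩ := by
  funext l
  simp only [Rcurv_eq_sub, Pi.sub_apply, Gamma, stdBasis, Fin.ext_iff]
  split_ifs <;> simp_all

lemma Rcurv_two_zero_zero (x : Fin n → ℝ) :
    Rcurv n hn ⟨2, by omega⟩ ⟨0, by omega⟩ ⟨0, by omega⟩ x = -stdBasis n ⟨3, by linarith⟩ := by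
  funext l
  simp only [Rcurv_eq_sub, Pi.sub_apply, Pi.neg_apply, Gamma, stdBasis, Fin.ext_iff]
  split_ifs <;> simp_all

end Christoffel

/-- At every `x`, the span of all curvature values `R₍ᵢ,ⱼ,ₖ₎(x)` is exactly the
two-dimensional subspace spanned by `e₂` and `e₄` (0-based: indices 1 and 3);
in particular it is nonzero at every point. -/
theorem curvature_image_span (n : ℕ) (hn : 4 ≤ n) (x : Fin n → ℝ) :
    Submodule.span ℝ {v : Fin n → ℝ | ∃ i j k : Fin n, v = Rcurv n hn i j k x} =
      Submodule.span ℝ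
        ({stdBasis n ⟨1, by omega⟩, stdBasis n ⟨3, by omega⟩} : Set (Fin n → ℝ)) ∧
    Submodule.span ℝ {v : Fin n → ℝ | ∃ i j k : Fin n, v = Rcurv n hn i j k x} ≠ ⊥ := by
  set S := Submodule.span ℝ {v : Fin n → ℝ | ∃ i j k : Fin n, v = Rcurv n hn i j k x}
  have he₂ : stdBasis n ⟨1, by omega⟩ ∈ S :=
    Submodule.subset_span ⟨_, _, _, (Rcurv_two_zero_two x).symm⟩
  have he₄ : stdBasis n ⟨3, by omega⟩ ∈ S := by
    rw [← neg_neg (stdBasis n _), ← Rcurv_two_zero_zero (hn := hn) x]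
    exact S.neg_mem (Submodule.subset_span ⟨_, _, _, rfl⟩)
  have hS : S = Submodule.span ℝ {stdBasis n ⟨1, by omega⟩, stdBasis n ⟨3, by omega⟩} := by
    refine le_antisymm (Submodule.span_le.2 ?_) (Submodule.span_le.2 (Set.pair_subset he₂ he₄))
    rintro _ ⟨i, j, k, rfl⟩
    simp only [stdBasis_eq_single]
    exact Submodule.pi_mem_span_pair_single (by simp [Fin.ext_iff])
      fun l h₁ h₃ => Rcurv_apply_eq_zero (by simpa [Fin.ext_iff] using h₁)
        (by simpa [Fin.ext_iff] using h₃) i j k x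
  refine ⟨hS, S.ne_bot_iff.2 ⟨_, he₂, ?_⟩⟩
  simp [stdBasis_eq_single]
end
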